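/- For every k ∈ {1,…,n} and every l with 2 < l ≤ n: if f_k(v_{l,η_k} + r_{l,η_k}·(1,1)) = f_k(v_{l−1,η_k} + r_{l−1,η_k}·(1,1)), then f_k(v_{l,η_k} + r_{l,η_k}·(1,1)) ≥ f_k(v_{l−2,η_k} + r_{l−2,η_k}·(1,1)) + 2. -/

import Mathlib

open Finset

/-- `Λ_{2,n}`: pairs `α ∈ ℕ²` with `1 ≤ α₁ + α₂ ≤ n`. -/
def Lam2 (n : ℕ) : Finset (ℕ × ℕ) :=
  ((range (n+1)) ×ˢ (range (n+1))).filter (fun α => 1 ≤ α.1 + α.2 ∧ α.1 + α.2 ≤ n)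

/-- `v̄ ∈ ℂ^{Λ_{2,n}}`, with `α`-coordinate `C(v₁,α₁)·C(v₂,α₂)`. -/
noncomputable def vbar (n : ℕ) (v : ℕ × ℕ) : (Lam2 n) → ℂ :=
  fun α => ((v.1.choose α.1.1 * v.2.choose α.1.2 : ℕ) : ℂ)

/-- `Λ_{3,n}`: triples `β ∈ ℕ³` with `1 ≤ β₁ + β₂ + β₃ ≤ n`. -/
def Lam3 (n : ℕ) : Finset (ℕ × ℕ × ℕ) :=
  ((range (n+1)) ×ˢ (range (n+1)) ×ˢ (range (n+1))).filter
    (fun β => 1 ≤ β.1 + β.2.1 + β.2.2 ∧ β.1 + β.2.1 + β.2.2 ≤ n)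

/-- The linear map `A_n : ℕ³ → ℕ²` with matrix rows `(1,1,n)` and `(0,1,n+1)`. -/
def Amap (n : ℕ) (β : ℕ × ℕ × ℕ) : ℕ × ℕ :=
  (β.1 + β.2.1 + n * β.2.2, β.2.1 + (n+1) * β.2.2)

/-- `c_β = Σ_{γ ≤ β} (−1)^{|β−γ|} C(β,γ) (A_nγ)‾`. -/
noncomputable def cvec (n : ℕ) (β : ℕ × ℕ × ℕ) : (Lam2 n) → ℂ :=
  ∑ γ ∈ (range (β.1+1)) ×ˢ (range (β.2.1+1)) ×ˢ (range (β.2.2+1)),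
    (((-1 : ℂ) ^ ((β.1 + β.2.1 + β.2.2) - (γ.1 + γ.2.1 + γ.2.2))) *
      ((β.1.choose γ.1 * β.2.1.choose γ.2.1 * β.2.2.choose γ.2.2 : ℕ) : ℂ)) •
      vbar n (Amap n γ)

/-- `J ∈ S_{A_n}`: `J ⊆ Λ_{3,n}`, `|J| = λ_{2,n}`, `det L^c_J ≠ 0`. -/
def memSA (n : ℕ) (J : Finset (ℕ × ℕ × ℕ)) : Prop :=
  J ⊆ Lam3 n ∧ J.card = (Lam2 n).card ∧
    ∀ e : (Lam2 n) ≃ J,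
      (Matrix.of fun i j : (Lam2 n) => cvec n (e i).1 j).det ≠ 0

/-- `m_J = Σ_{β ∈ J} A_nβ`. -/
def mJ (n : ℕ) (J : Finset (ℕ × ℕ × ℕ)) : ℕ × ℕ := ∑ β ∈ J, Amap n β

/-- `f_k(v) = k·v₁ + (1−k)·v₂`. -/
def fk (k : ℕ) (v : ℕ × ℕ) : ℤ := (k : ℤ) * v.1 + (1 - (k : ℤ)) * v.2

/-- Data of a sequence `η = (z, d₀, d₁, …, d_r)`. -/
structure OmegaData where
  r : ℕ
  z : Bool
  d : ℕ → ℕ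

/-- `η ∈ Ω`: `d₀ = 0`, `d_i ≥ 1` for `1 ≤ i ≤ r` (and `d_i = 0` beyond `r`),
and `d₀ + ⋯ + d_r = n`. -/
def OmegaData.IsOmega (n : ℕ) (η : OmegaData) : Prop :=
  η.d 0 = 0 ∧ (∀ i, 1 ≤ i → i ≤ η.r → 1 ≤ η.d i) ∧
  (∀ i, η.r < i → η.d i = 0) ∧
  (∑ i ∈ range (η.r + 1), η.d i) = n

/-- The unique `t` with `Σ_{i=0}^{t−1} d_i < j ≤ Σ_{i=0}^{t} d_i`. -/
noncomputable def tIdx (η : OmegaData) (j : ℕ) : ℕ :=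
  sInf {t | j ≤ ∑ i ∈ range (t+1), η.d i}

/-- The vector `v_{j,η} ∈ ℕ²`. -/
noncomputable def vvec (η : OmegaData) (j : ℕ) : ℕ × ℕ :=
  let t := tIdx η j
  let c := j - ∑ i ∈ range t, η.d i
  let a := (∑ i ∈ range t, if (Odd i ↔ Odd t) then η.d i else 0) + c
  if (η.z = true) ↔ Odd t then (a, 0) else (0, a)

/-- `T_{j,η}` for `1 ≤ j ≤ n`, and `T_{0,η} = {(1,1),…,(n,n)}`. -/
noncomputable def Tj (n : ℕ) (η : OmegaData) (j : ℕ) : Finset (ℕ × ℕ) :=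
  if j = 0 then (range n).image (fun q => (q+1, q+1))
  else (range (n - j + 1)).image (fun p => vvec η j + (p, p))

/-- `T_η = ⋃_{j=0}^{n} T_{j,η}`. -/
noncomputable def Tset (n : ℕ) (η : OmegaData) : Finset (ℕ × ℕ) :=
  (range (n+1)).biUnion (fun j => Tj n η j)

/-- `r_{i,η} = n·π₂(v_{i,η})`. -/
noncomputable def rshift (n : ℕ) (η : OmegaData) (i : ℕ) : ℕ := n * (vvec η i).2

/-- `T'_η = T_{0,η} ∪ ⋃_{i=1}^{n} (T_{i,η} + r_{i,η})`. -/
noncomputable def Tset' (n : ℕ) (η : OmegaData) : Finset (ℕ × ℕ) :=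
  Tj n η 0 ∪ (Finset.Icc 1 n).biUnion
    (fun i => (Tj n η i).image (fun v => v + (rshift n η i, rshift n η i)))

/-- `J_η`: the (unique) subset of `Λ_{3,n}` with `A_n(J_η) = T'_η`. -/
noncomputable def Jset (n : ℕ) (η : OmegaData) : Finset (ℕ × ℕ × ℕ) :=
  (Lam3 n).filter (fun β => Amap n β ∈ Tset' n η)

/-- `z_k = 1` iff `f_k((1,0)) ≤ f_k((n,n+1))`. -/
def zk (n k : ℕ) : Bool := decide (fk k (1, 0) ≤ fk k (n, n+1))

/-- `t_l` in the recursive definition of `η_k`, where `O`, `E` are the odd- and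
even-indexed partial sums `Σ_{j<l, j odd} d_{k,j}` and `Σ_{j<l, j even} d_{k,j}`. -/
noncomputable def tval (n k : ℕ) (l O E : ℕ) : ℕ :=
  let w := (if Odd l then E else O) + 1
  if ((zk n k = true) ↔ Odd l) then
    sSup {m : ℕ | (m : ℤ) * fk k (1, 0) ≤ fk k (w * n, w * (n+1))}
  else
    sSup {m : ℕ | (m : ℤ) * fk k (n, n+1) ≤ fk k (w, 0)}

/-- The pair `(Σ_{j≤l, j odd} d_{k,j}, Σ_{j≤l, j even} d_{k,j})` of the recursion
defining `η_k`. -/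
noncomputable def oeSums (n k : ℕ) : ℕ → ℕ × ℕ
  | 0 => (0, 0)
  | l + 1 =>
    let p := oeSums n k l
    let O := p.1
    let E := p.2
    let S := O + E
    let dnext := if S < n then
        min (n - S) (tval n k (l+1) O E - (if Odd (l+1) then O else E))
      else 0
    if Odd (l+1) then (O + dnext, E) else (O, E + dnext)

/-- `d_{k,l}`. -/
noncomputable def dk (n k : ℕ) : ℕ → ℕ
  | 0 => 0
  | l + 1 =>
    let p := oeSums n k l
    let O := p.1
    let E := p.2
    let S := O + E
    if S < n then
      min (n - S) (tval n k (l+1) O E - (if Odd (l+1) then O else E))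
    else 0

/-- `η_k = (z_k, d_{k,0}, …, d_{k,r})`, where `r` is the first index with
`Σ_{j=0}^{r} d_{k,j} = n`. -/
noncomputable def etak (n k : ℕ) : OmegaData :=
  { r := sInf {r | ∑ j ∈ range (r+1), dk n k j = n},
    z := zk n k,
    d := dk n k }

/-!
Write `g(j) = f_k(v_{j,η} + r_{j,η}·(1,1))` and `t(j)` for the block index of `j`. If
`v_{j,η} = (a, 0)` then `g(j) = k a`, and if `v_{j,η} = (0, a)` then `g(j) = (n + 1 - k) a`.
So `g(j) = w(j) a(j)`, where the weight `w(j) ∈ {k, n + 1 - k}` depends only on the parity of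
`t(j)` and `a(j)` strictly increases along indices whose blocks have the same parity.
Hence `g(l) = g(l-1)` forces `t(l-1)` and `t(l)` to have different parities, and `t(l-2)` then
shares its parity with one of them, giving `g(l-2) + w(l-2) ≤ g(l)`. For `k = 1` or `k = n`
the sequence `η_k` is the single block `d_{k,1} = n`, so the parities cannot differ; otherwise
every weight is at least `2`.

For `η_k` one also needs that the blocks cover `{1, …, n}`: the recursion keeps `s_l < t_l`,
so every `d_{k,l}` is positive and they sum to `n`.
-/

section Blocks

variable (η : OmegaData)

lemma le_sum_range_tIdx_succ {j : ℕ} (hj : j ≤ ∑ i ∈ range (η.r + 1), η.d i) :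
    j ≤ ∑ i ∈ range (tIdx η j + 1), η.d i :=
  Nat.sInf_mem (s := {t | j ≤ ∑ i ∈ range (t + 1), η.d i}) ⟨η.r, hj⟩

lemma sum_range_tIdx_lt {j : ℕ} (hj : 1 ≤ j) : ∑ i ∈ range (tIdx η j), η.d i < j := by
  rcases Nat.eq_zero_or_pos (tIdx η j) with h | h
  · rw [h, sum_range_zero]; omega
  · by_contra! hc
    have : tIdx η j ≤ tIdx η j - 1 :=
      Nat.sInf_le (show j ≤ ∑ i ∈ range (tIdx η j - 1 + 1), η.d i by
        rwa [Nat.sub_add_cancel h])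
    omega

lemma tIdx_mono {j j' : ℕ} (hjj' : j ≤ j') (hj' : j' ≤ ∑ i ∈ range (η.r + 1), η.d i) :
    tIdx η j ≤ tIdx η j' :=
  Nat.sInf_le (hjj'.trans (le_sum_range_tIdx_succ η hj'))

lemma tIdx_eq {j t : ℕ} (hlt : ∑ i ∈ range t, η.d i < j)
    (hle : j ≤ ∑ i ∈ range (t + 1), η.d i) : tIdx η j = t := by
  refine le_antisymm (Nat.sInf_le hle) (not_lt.1 fun h => ?_)
  have hmem : j ≤ ∑ i ∈ range (tIdx η j + 1), η.d i :=
    Nat.sInf_mem (s := {t | j ≤ ∑ i ∈ range (t + 1), η.d i}) ⟨t, hle⟩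
  have : ∑ i ∈ range (tIdx η j + 1), η.d i ≤ ∑ i ∈ range t, η.d i :=
    sum_le_sum_of_subset (range_subset_range.2 h)
  omega

noncomputable def vcoord (j : ℕ) : ℕ :=
  (∑ i ∈ range (tIdx η j), if (Odd i ↔ Odd (tIdx η j)) then η.d i else 0) +
    (j - ∑ i ∈ range (tIdx η j), η.d i)

lemma vvec_eq (j : ℕ) : vvec η j =
    if (η.z = true) ↔ Odd (tIdx η j) then (vcoord η j, 0) else (0, vcoord η j) := rfl

lemma vcoord_lt_of_odd_iff {j j' : ℕ} (hj : 1 ≤ j) (hjj' : j < j')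
    (hj' : j' ≤ ∑ i ∈ range (η.r + 1), η.d i)
    (hpar : Odd (tIdx η j) ↔ Odd (tIdx η j')) : vcoord η j < vcoord η j' := by
  have hle := le_sum_range_tIdx_succ η (hjj'.le.trans hj')
  have hlt := sum_range_tIdx_lt η hj
  have hlt' := sum_range_tIdx_lt η (hj.trans hjj'.le)
  unfold vcoord
  set t := tIdx η j
  set t' := tIdx η j'
  obtain he | htt' : t = t' ∨ t < t' := (tIdx_mono η hjj'.le hj').eq_or_lt
  · rw [← he] at hlt' ⊢
    omega
  · simp only [hpar]
    -- the block `t` contributes all of `d_t` to the coordinate at `j'`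
    have hsucc : ∑ i ∈ range (t + 1), (if Odd i ↔ Odd t' then η.d i else 0) =
        ∑ i ∈ range t, (if Odd i ↔ Odd t' then η.d i else 0) + η.d t := by
      rw [sum_range_succ, if_pos hpar]
    have hsub : ∑ i ∈ range (t + 1), (if Odd i ↔ Odd t' then η.d i else 0) ≤
        ∑ i ∈ range t', (if Odd i ↔ Odd t' then η.d i else 0) :=
      sum_le_sum_of_subset (range_subset_range.2 htt')
    rw [sum_range_succ] at hle
    omega

noncomputable def fkShift (n k : ℕ) (j : ℕ) : ℤ :=
  fk k (vvec η j + (rshift n η j, rshift n η j))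

noncomputable def fkWeight (n k : ℕ) (j : ℕ) : ℕ :=
  if (η.z = true) ↔ Odd (tIdx η j) then k else n + 1 - k

lemma le_fkWeight {n k m : ℕ} (hmk : m ≤ k) (hmn : m + k ≤ n + 1) (j : ℕ) :
    m ≤ fkWeight η n k j := by
  unfold fkWeight; split <;> omega

-- `f_k(a, 0) = k a` and `f_k(na, (n + 1) a) = (n + 1 - k) a`.
lemma fkShift_eq {n k : ℕ} (hk : k ≤ n + 1) (j : ℕ) :
    fkShift η n k j = fkWeight η n k j * vcoord η j := by
  unfold fkShift fkWeight rshift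
  rw [vvec_eq]
  split_ifs
  · simp [fk]
  · simp only [fk, Prod.mk_add_mk, zero_add]
    push_cast [Nat.cast_sub hk]
    ring

lemma fkShift_add_fkWeight_le {n k j j' : ℕ} (hk : k ≤ n + 1) (hj : 1 ≤ j) (hjj' : j < j')
    (hj' : j' ≤ ∑ i ∈ range (η.r + 1), η.d i)
    (hpar : Odd (tIdx η j) ↔ Odd (tIdx η j')) :
    fkShift η n k j + fkWeight η n k j ≤ fkShift η n k j' := by
  have hw : fkWeight η n k j = fkWeight η n k j' := by
    simp only [fkWeight, hpar]
  have ha : (vcoord η j : ℤ) + 1 ≤ vcoord η j' := by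
    exact_mod_cast vcoord_lt_of_odd_iff η hj hjj' hj' hpar
  rw [fkShift_eq η hk, fkShift_eq η hk, ← hw]
  nlinarith [(fkWeight η n k j).cast_nonneg (α := ℤ)]

end Blocks

section Recursion

variable {n k : ℕ}

lemma fk_one_zero (k : ℕ) : fk k (1, 0) = k := by simp [fk]

lemma fk_mul_n_succ (hk : k ≤ n + 1) (w : ℕ) :
    fk k (w * n, w * (n + 1)) = ((w * (n + 1 - k) : ℕ) : ℤ) := by
  simp only [fk]; push_cast [Nat.cast_sub hk]; ring

lemma fk_mul_zero (k w : ℕ) : fk k (w, 0) = ((w * k : ℕ) : ℤ) := by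
  simp only [fk]; push_cast; ring

lemma zk_eq_true_iff (hk : k ≤ n + 1) : zk n k = true ↔ 2 * k ≤ n + 1 := by
  have h := fk_mul_n_succ hk 1
  simp only [one_mul] at h
  rw [zk, decide_eq_true_iff, fk_one_zero, h]
  omega

-- The two values `f_k(1,0) = k` and `f_k(n,n+1) = n + 1 - k`, in increasing order.
def wSmall (n k : ℕ) : ℕ := min k (n + 1 - k)

def wLarge (n k : ℕ) : ℕ := max k (n + 1 - k)

lemma sSup_setOf_natCast_mul_le {a : ℕ} (ha : 0 < a) (c : ℕ) :
    sSup {m : ℕ | (m : ℤ) * a ≤ c} = c / a := by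
  have : {m : ℕ | (m : ℤ) * a ≤ c} = Set.Iic (c / a) := by
    ext m
    simp only [Set.mem_Iic, Nat.le_div_iff_mul_le ha]
    exact_mod_cast Iff.rfl
  rw [this, csSup_Iic]

-- `z_k` decides which of the two directions odd blocks take, so in both cases the odd
-- steps divide by the smaller weight.
lemma tval_eq (hk1 : 1 ≤ k) (hkn : k ≤ n) (l O E : ℕ) :
    tval n k l O E =
      if Odd l then (E + 1) * wLarge n k / wSmall n k else (O + 1) * wSmall n k / wLarge n k := by
  have hk : k ≤ n + 1 := by omega
  have hnk : 0 < n + 1 - k := by omega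
  have hfk : fk k (n, n + 1) = ((n + 1 - k : ℕ) : ℤ) := by simpa using fk_mul_n_succ hk 1
  simp only [tval, fk_one_zero, hfk]
  simp only [fk_mul_n_succ hk, fk_mul_zero, sSup_setOf_natCast_mul_le hk1,
    sSup_setOf_natCast_mul_le hnk, wSmall, wLarge]
  by_cases hz : 2 * k ≤ n + 1
  · rw [min_eq_left (by omega), max_eq_right (by omega)]
    by_cases hl : Odd l <;> simp [hl, (zk_eq_true_iff hk).2 hz]
  · rw [min_eq_right (by omega), max_eq_left (by omega)]
    have hz' : zk n k = false := by rwa [Bool.eq_false_iff, ne_eq, zk_eq_true_iff hk]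
    by_cases hl : Odd l <;> simp [hl, hz']

lemma oeSums_zero : oeSums n k 0 = (0, 0) := rfl

lemma oeSums_succ (l : ℕ) : oeSums n k (l + 1) =
    if Odd (l + 1) then ((oeSums n k l).1 + dk n k (l + 1), (oeSums n k l).2)
    else ((oeSums n k l).1, (oeSums n k l).2 + dk n k (l + 1)) := rfl

lemma dk_succ (l : ℕ) : dk n k (l + 1) =
    if (oeSums n k l).1 + (oeSums n k l).2 < n then
      min (n - ((oeSums n k l).1 + (oeSums n k l).2))
        (tval n k (l + 1) (oeSums n k l).1 (oeSums n k l).2 -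
          if Odd (l + 1) then (oeSums n k l).1 else (oeSums n k l).2)
    else 0 := rfl

lemma sum_oeSums_succ (l : ℕ) : (oeSums n k (l + 1)).1 + (oeSums n k (l + 1)).2 =
    (oeSums n k l).1 + (oeSums n k l).2 + dk n k (l + 1) := by
  rw [oeSums_succ]; split_ifs <;> dsimp only <;> omega

lemma sum_range_dk (l : ℕ) :
    ∑ j ∈ range (l + 1), dk n k j = (oeSums n k l).1 + (oeSums n k l).2 := by
  induction l with
  | zero => rfl
  | succ l ih => rw [sum_range_succ, ih, sum_oeSums_succ]

-- After a step that does not exhaust `n`, the new partial sum is the floor `t_l`, which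
-- makes the next `t_{l+1}` exceed the other partial sum.
lemma succ_le_floor_step {a b : ℕ} (ha : 0 < a) (hb : 0 < b) (y : ℕ) :
    y + 1 ≤ ((y + 1) * b / a + 1) * a / b :=
  (Nat.le_div_iff_mul_le hb).2 ((Nat.lt_mul_div_succ _ ha).le.trans_eq (mul_comm _ _))

-- The paper's `s_l < t_l` (hence `d_{k,l} ≥ 1`) as long as the partial sum is below `n`.
lemma oeSums_invariant (hk1 : 1 ≤ k) (hkn : k ≤ n) (l : ℕ) :
    (oeSums n k l).1 + (oeSums n k l).2 ≤ n ∧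
    ((oeSums n k l).1 + (oeSums n k l).2 < n →
      if Odd (l + 1) then (oeSums n k l).1 + 1 ≤ ((oeSums n k l).2 + 1) * wLarge n k / wSmall n k
      else (oeSums n k l).2 + 1 ≤ ((oeSums n k l).1 + 1) * wSmall n k / wLarge n k) := by
  have hwS : 0 < wSmall n k := by unfold wSmall; omega
  have hwL : 0 < wLarge n k := by unfold wLarge; omega
  induction l with
  | zero =>
    refine ⟨Nat.zero_le _, fun _ => ?_⟩
    rw [oeSums_zero]
    have : wSmall n k ≤ wLarge n k := min_le_max
    simpa using (Nat.le_div_iff_mul_le hwS).2 (by simpa using this)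
  | succ l ih =>
    obtain ⟨hS, hstep⟩ := ih
    set O := (oeSums n k l).1
    set E := (oeSums n k l).2
    by_cases hlt : O + E < n
    · specialize hstep hlt
      rcases Nat.even_or_odd (l + 1) with heven | hodd
      · have hodd' : Odd (l + 1 + 1) := heven.add_one
        rw [if_neg (Nat.not_odd_iff_even.2 heven)] at hstep
        have hd : dk n k (l + 1) = min (n - (O + E)) ((O + 1) * wSmall n k / wLarge n k - E) := by
          rw [dk_succ, if_pos hlt, tval_eq hk1 hkn, if_neg (Nat.not_odd_iff_even.2 heven),
            if_neg (Nat.not_odd_iff_even.2 heven)]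
        rw [oeSums_succ, if_neg (Nat.not_odd_iff_even.2 heven), if_pos hodd']
        refine ⟨by dsimp only; omega, fun hlt' => ?_⟩
        dsimp only at hlt' ⊢
        have : E + dk n k (l + 1) = (O + 1) * wSmall n k / wLarge n k := by omega
        rw [this]
        exact succ_le_floor_step hwL hwS O
      · have heven' : ¬ Odd (l + 1 + 1) := Nat.not_odd_iff_even.2 hodd.add_one
        rw [if_pos hodd] at hstep
        have hd : dk n k (l + 1) = min (n - (O + E)) ((E + 1) * wLarge n k / wSmall n k - O) := by
          rw [dk_succ, if_pos hlt, tval_eq hk1 hkn, if_pos hodd, if_pos hodd]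
        rw [oeSums_succ, if_pos hodd, if_neg heven']
        refine ⟨by dsimp only; omega, fun hlt' => ?_⟩
        dsimp only at hlt' ⊢
        have : O + dk n k (l + 1) = (E + 1) * wLarge n k / wSmall n k := by omega
        rw [this]
        exact succ_le_floor_step hwS hwL E
    · have hd : dk n k (l + 1) = 0 := by rw [dk_succ, if_neg hlt]
      have := sum_oeSums_succ (n := n) (k := k) l
      exact ⟨by omega, by omega⟩

lemma one_le_dk_succ (hk1 : 1 ≤ k) (hkn : k ≤ n) {l : ℕ}
    (hlt : (oeSums n k l).1 + (oeSums n k l).2 < n) : 1 ≤ dk n k (l + 1) := by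
  have hstep := (oeSums_invariant hk1 hkn l).2 hlt
  rw [dk_succ, if_pos hlt, tval_eq hk1 hkn]
  split_ifs at hstep ⊢ <;> omega

lemma sum_oeSums_eq (hk1 : 1 ≤ k) (hkn : k ≤ n) :
    (oeSums n k n).1 + (oeSums n k n).2 = n := by
  have key : ∀ l, min l n ≤ (oeSums n k l).1 + (oeSums n k l).2 := by
    intro l
    induction l with
    | zero => simp
    | succ l ih =>
      have := sum_oeSums_succ (n := n) (k := k) l
      by_cases hlt : (oeSums n k l).1 + (oeSums n k l).2 < n
      · have := one_le_dk_succ hk1 hkn hlt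
        omega
      · omega
  have := key n
  have := (oeSums_invariant hk1 hkn n).1
  omega

lemma sum_range_etak_d (hk1 : 1 ≤ k) (hkn : k ≤ n) :
    ∑ j ∈ range ((etak n k).r + 1), (etak n k).d j = n :=
  Nat.sInf_mem (s := {r | ∑ j ∈ range (r + 1), dk n k j = n})
    ⟨n, show _ = n by rw [sum_range_dk, sum_oeSums_eq hk1 hkn]⟩

lemma dk_one (hk : k = 1 ∨ k = n) (hn : 1 ≤ n) : dk n k 1 = n := by
  have hk1 : 1 ≤ k := by omega
  have hkn : k ≤ n := by omega
  have hw : wSmall n k = 1 ∧ wLarge n k = n := by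
    unfold wSmall wLarge; omega
  rw [dk_succ, oeSums_zero, tval_eq hk1 hkn, hw.1, hw.2]
  simp [show 0 < n by omega]

lemma tIdx_etak_of_dk_one (hd : dk n k 1 = n) {j : ℕ} (hj : 1 ≤ j) (hjn : j ≤ n) :
    tIdx (etak n k) j = 1 :=
  tIdx_eq _ (show ∑ i ∈ range 1, dk n k i < j by rw [sum_range_one]; exact hj)
    (show j ≤ ∑ i ∈ range 2, dk n k i by rw [sum_range_succ, sum_range_one, hd]; omega)

end Recursion

theorem stmt18_general (n : ℕ) (k : ℕ) (hk1 : 1 ≤ k) (hkn : k ≤ n)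
    (l : ℕ) (hl : 2 < l) (hln : l ≤ n)
    (heq : fk k (vvec (etak n k) l + (rshift n (etak n k) l, rshift n (etak n k) l)) =
      fk k (vvec (etak n k) (l-1) + (rshift n (etak n k) (l-1), rshift n (etak n k) (l-1)))) :
    fk k (vvec (etak n k) (l-2) + (rshift n (etak n k) (l-2), rshift n (etak n k) (l-2))) + 2 ≤
    fk k (vvec (etak n k) l + (rshift n (etak n k) l, rshift n (etak n k) l)) := by
  set η := etak n k
  change fkShift η n k l = fkShift η n k (l - 1) at heq
  change fkShift η n k (l - 2) + 2 ≤ fkShift η n k l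
  have gap {j j' : ℕ} (hj : 1 ≤ j) (hjj' : j < j') (hj' : j' ≤ l)
      (hpar : Odd (tIdx η j) ↔ Odd (tIdx η j')) :
      fkShift η n k j + fkWeight η n k j ≤ fkShift η n k j' :=
    fkShift_add_fkWeight_le η (by omega) hj hjj'
      ((hj'.trans hln).trans_eq (sum_range_etak_d hk1 hkn).symm) hpar
  have hpar : ¬ (Odd (tIdx η (l - 1)) ↔ Odd (tIdx η l)) := fun hpar => by
    have := gap (by omega) (by omega) le_rfl hpar
    have : 1 ≤ fkWeight η n k (l - 1) := le_fkWeight η hk1 (by omega) _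
    omega
  have hk : 2 ≤ k ∧ k + 1 ≤ n := by
    by_contra hk
    have hd := dk_one (n := n) (k := k) (by omega) (by omega)
    exact hpar (by rw [tIdx_etak_of_dk_one hd (by omega) (by omega),
      tIdx_etak_of_dk_one hd (by omega) hln])
  have hw : 2 ≤ fkWeight η n k (l - 2) := le_fkWeight η hk.1 (by omega) _
  by_cases h : Odd (tIdx η (l - 2)) ↔ Odd (tIdx η (l - 1))
  · have := gap (by omega) (by omega) (by omega) h
    omega
  · have := gap (j := l - 2) (j' := l) (by omega) (by omega) le_rfl (by tauto)
    omega

theorem stmt18 (n : ℕ) (hn : 1 ≤ n) (k : ℕ) (hk1 : 1 ≤ k) (hkn : k ≤ n)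
    (l : ℕ) (hl : 2 < l) (hln : l ≤ n)
    (heq : fk k (vvec (etak n k) l + (rshift n (etak n k) l, rshift n (etak n k) l)) =
      fk k (vvec (etak n k) (l-1) + (rshift n (etak n k) (l-1), rshift n (etak n k) (l-1)))) :
    fk k (vvec (etak n k) (l-2) + (rshift n (etak n k) (l-2), rshift n (etak n k) (l-2))) + 2 ≤
    fk k (vvec (etak n k) l + (rshift n (etak n k) l, rshift n (etak n k) l)) :=
  stmt18_general n k hk1 hkn l hl hln heq
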